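/- arXiv:1407.0773 — 3 statements merged into one kernel-verified Lean document; each statement's English description precedes it below -/
import Mathlib

section
/- Let H > 0 and ε > 0, let {M,…,N} be a finite range of mode indices, and let γ : (0,∞) × [−H,0] → ℝ be continuous. For each index j let φ_j : (0,∞) × [−H,0] → ℝ be continuous and differentiable in its first argument with continuous partial derivative φ_{jR}; assume the orthonormality relations ∫_{−H}^{0} γ(R,z) φ_j(R,z) φ_l(R,z) dz = δ_{jl} hold for all R > 0 and all indices j, l, and define C_{jl}(R) = ∫_{−H}^{0} γ(R,z) φ_{jR}(R,z) φ_l(R,z) dz. Let k_j, θ_j : (0,∞) → ℝ be differentiable with θ_j'(R) = k_j(R), and let A_j : (0,∞) → ℂ be differentiable. Define P(r,z) = Σ_{j=M}^{N} A_j(εr) φ_j(εr, z) e^{i θ_j(εr)/ε}. Then for every r > 0 one has the exact identity ∫_{−H}^{0} γ(εr,z) Im( P_r(r,z) · conj(P(r,z)) ) dz = Σ_{l=M}^{N} k_l(εr) |A_l(εr)|² + ε Σ_{l=M}^{N} Σ_{j=M}^{N} C_{lj}(εr) Im( A_l(εr) conj(A_j(εr)) e^{i(θ_l(εr)−θ_j(εr))/ε}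 ) + ε Σ_{l=M}^{N} Im( A_l'(εr) conj(A_l(εr)) ). -/
open Set Finset

/-!
Differentiating the ansatz in `r`, the chain-rule factor `ε` cancels the `1/ε` of the phase, so
`P_r = ∑_j ((ε A_j' + i k_j A_j) φ_j + ε A_j φ_{jR}) e^{iθ_j/ε}`. Multiplying by `conj P` and
integrating against `γ`, orthonormality keeps only the diagonal of the `φ_j φ_l` terms, where the
phases cancel, while the `φ_{jR} φ_l` terms produce the coupling coefficients `C_{jl}`.
-/

open Complex ComplexConjugate intervalIntegral MeasureTheory
open scoped Interval

lemma exp_I_div_mul_conj_exp_I_div (ε x y : ℝ) :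
    exp (I * x / ε) * conj (exp (I * y / ε)) = exp (I * (x - y) / ε) := by
  rw [← exp_conj, ← exp_add]
  congr 1
  simp only [map_div₀, map_mul, conj_I, conj_ofReal]
  ring

lemma im_mul_exp_mul_conj_mul_exp (ε x y : ℝ) (a b : ℂ) :
    (a * exp (I * x / ε) * conj (b * exp (I * y / ε))).im
      = (a * conj b * exp (I * (x - y) / ε)).im := by
  rw [map_mul, ← exp_I_div_mul_conj_exp_I_div]
  congr 1
  ring

lemma im_flux_diagonal_term (ε k x : ℝ) (a a' : ℂ) :
    ((ε * a' + I * k * a) * exp (I * x / ε) * conj (a * exp (I * x / ε))).im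
      = k * ‖a‖ ^ 2 + ε * (a' * conj a).im := by
  rw [im_mul_exp_mul_conj_mul_exp, sub_self, mul_zero, zero_div, exp_zero, mul_one, add_mul,
    mul_assoc, mul_assoc, mul_conj', add_im, im_ofReal_mul, mul_assoc I, I_mul_im, ← ofReal_pow,
    ← ofReal_mul, ofReal_re]
  ring

lemma hasDerivAt_mode_comp_mul {A : ℝ → ℂ} {φ θ : ℝ → ℝ} {A' : ℂ} {φ' k ε r : ℝ} (hε : ε ≠ 0)
    (hA : HasDerivAt A A' (ε * r)) (hφ : HasDerivAt φ φ' (ε * r)) (hθ : HasDerivAt θ k (ε * r)) :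
    HasDerivAt (fun s => A (ε * s) * φ (ε * s) * exp (I * θ (ε * s) / ε))
      ((ε * A' + I * k * A (ε * r)) * exp (I * θ (ε * r) / ε) * φ (ε * r)
        + ε * A (ε * r) * exp (I * θ (ε * r) / ε) * φ') r := by
  have hmode : HasDerivAt (fun R => A R * φ R * exp (I * θ R / ε))
      ((A' * φ (ε * r) + A (ε * r) * φ') * exp (I * θ (ε * r) / ε)
        + A (ε * r) * φ (ε * r) * (exp (I * θ (ε * r) / ε) * (I * k / ε))) (ε * r) :=
    (hA.fun_mul hφ.ofReal_comp).fun_mul ((hθ.ofReal_comp.const_mul I).div_const (ε : ℂ)).cexp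
  have hscale : HasDerivAt (fun s : ℝ => ε * s) ε r := by
    simpa using (hasDerivAt_id r).const_mul ε
  have hchain := hmode.scomp r hscale
  rw [real_smul] at hchain
  refine hchain.congr_deriv ?_
  have hε' : (ε : ℂ) ≠ 0 := ofReal_ne_zero.mpr hε
  field_simp
  ring

lemma integral_finsetSum_finsetSum {ι κ E : Type*} [NormedAddCommGroup E] [NormedSpace ℝ E]
    {s : Finset ι} {t : Finset κ} {a b : ℝ} {μ : Measure ℝ} {f : ι → κ → ℝ → E}
    (h : ∀ i ∈ s, ∀ j ∈ t, IntervalIntegrable (f i j) μ a b) :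
    ∫ x in a..b, ∑ i ∈ s, ∑ j ∈ t, f i j x ∂μ = ∑ i ∈ s, ∑ j ∈ t, ∫ x in a..b, f i j x ∂μ := by
  rw [integral_finsetSum fun i hi => by
    simpa only [Finset.sum_fn] using IntervalIntegrable.sum t (h i hi)]
  exact Finset.sum_congr rfl fun i hi => integral_finsetSum (h i hi)

lemma integral_mul_im_sum_mul_conj_sum {ι : Type*} (s : Finset ι) {a b : ℝ} {w : ℝ → ℝ}
    {f g h : ι → ℝ → ℝ} (α β c : ι → ℂ) (hw : ContinuousOn w [[a, b]])
    (hf : ∀ j ∈ s, ContinuousOn (f j) [[a, b]]) (hg : ∀ j ∈ s, ContinuousOn (g j) [[a, b]])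
    (hh : ∀ l ∈ s, ContinuousOn (h l) [[a, b]]) :
    ∫ z in a..b, w z * ((∑ j ∈ s, (α j * f j z + β j * g j z)) * conj (∑ l ∈ s, c l * h l z)).im
      = ∑ j ∈ s, ∑ l ∈ s, ((∫ z in a..b, w z * f j z * h l z) * (α j * conj (c l)).im
          + (∫ z in a..b, w z * g j z * h l z) * (β j * conj (c l)).im) := by
  have hint : ∀ v : ι → ℝ → ℝ, (∀ j ∈ s, ContinuousOn (v j) [[a, b]]) → ∀ j ∈ s, ∀ l ∈ s,
      IntervalIntegrable (fun z => w z * v j z * h l z) volume a b :=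
    fun v hv j hj l hl => ((hw.mul (hv j hj)).mul (hh l hl)).intervalIntegrable
  have hpoint : ∀ z, w z * ((∑ j ∈ s, (α j * f j z + β j * g j z))
        * conj (∑ l ∈ s, c l * h l z)).im
      = ∑ j ∈ s, ∑ l ∈ s, (w z * f j z * h l z * (α j * conj (c l)).im
          + w z * g j z * h l z * (β j * conj (c l)).im) := by
    intro z
    simp only [map_sum, map_mul, conj_ofReal]
    rw [Finset.sum_mul_sum, im_sum, Finset.mul_sum]
    refine Finset.sum_congr rfl fun j _ => ?_
    rw [im_sum, Finset.mul_sum]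
    refine Finset.sum_congr rfl fun l _ => ?_
    have : (α j * f j z + β j * g j z) * (conj (c l) * h l z)
        = ((f j z * h l z : ℝ) : ℂ) * (α j * conj (c l))
          + ((g j z * h l z : ℝ) : ℂ) * (β j * conj (c l)) := by
      push_cast; ring
    rw [this, add_im, im_ofReal_mul, im_ofReal_mul]
    ring
  simp_rw [hpoint]
  refine (integral_finsetSum_finsetSum fun j hj l hl =>
    ((hint f hf j hj l hl).mul_const _).add ((hint g hg j hj l hl).mul_const _)).trans ?_
  refine Finset.sum_congr rfl fun j hj => Finset.sum_congr rfl fun l hl => ?_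
  rw [integral_add ((hint f hf j hj l hl).mul_const _) ((hint g hg j hj l hl).mul_const _),
    intervalIntegral.integral_mul_const, intervalIntegral.integral_mul_const]

lemma sum_modal_flux_coefficients {ι : Type*} [DecidableEq ι] (s : Finset ι) (ε : ℝ)
    (A A' : ι → ℂ) (k θ : ι → ℝ) (C : ι → ι → ℝ) :
    ∑ j ∈ s, ∑ l ∈ s,
        ((if j = l then (1 : ℝ) else 0)
            * ((ε * A' j + I * k j * A j) * exp (I * θ j / ε) * conj (A l * exp (I * θ l / ε))).im
          + C j l * (ε * A j * exp (I * θ j / ε) * conj (A l * exp (I * θ l / ε))).im)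
      = ∑ l ∈ s, k l * ‖A l‖ ^ 2
        + ε * ∑ l ∈ s, ∑ j ∈ s, C l j * (A l * conj (A j) * exp (I * (θ l - θ j) / ε)).im
        + ε * ∑ l ∈ s, (A' l * conj (A l)).im := by
  have hdiag : ∀ j ∈ s, ∑ l ∈ s, (if j = l then (1 : ℝ) else 0)
        * ((ε * A' j + I * k j * A j) * exp (I * θ j / ε) * conj (A l * exp (I * θ l / ε))).im
      = k j * ‖A j‖ ^ 2 + ε * (A' j * conj (A j)).im := fun j hj => by
    simp only [ite_mul, one_mul, zero_mul, Finset.sum_ite_eq, if_pos hj, im_flux_diagonal_term]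
  have hcoupling : ∀ j l, (ε * A j * exp (I * θ j / ε) * conj (A l * exp (I * θ l / ε))).im
      = ε * (A j * conj (A l) * exp (I * (θ j - θ l) / ε)).im := fun j l => by
    rw [im_mul_exp_mul_conj_mul_exp, mul_assoc, mul_assoc, im_ofReal_mul, ← mul_assoc]
  simp only [Finset.sum_add_distrib, Finset.sum_congr rfl hdiag, hcoupling, Finset.mul_sum,
    mul_left_comm (C _ _) ε]
  ring

theorem flux_of_modal_ansatz_general
    (H ε : ℝ) (hH : 0 < H) (hε : 0 < ε) (M N : ℤ)
    (γ : ℝ → ℝ → ℝ)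
    (hγ : ContinuousOn (fun p : ℝ × ℝ => γ p.1 p.2) (Set.Ioi 0 ×ˢ Set.Icc (-H) 0))
    (φ φR : ℤ → ℝ → ℝ → ℝ)
    (hφcont : ∀ j ∈ Finset.Icc M N,
      ContinuousOn (fun p : ℝ × ℝ => φ j p.1 p.2) (Set.Ioi 0 ×ˢ Set.Icc (-H) 0))
    (hφR : ∀ j ∈ Finset.Icc M N, ∀ R ∈ Set.Ioi (0:ℝ), ∀ z ∈ Set.Icc (-H) 0,
      HasDerivAt (fun s => φ j s z) (φR j R z) R)
    (hφRcont : ∀ j ∈ Finset.Icc M N,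
      ContinuousOn (fun p : ℝ × ℝ => φR j p.1 p.2) (Set.Ioi 0 ×ˢ Set.Icc (-H) 0))
    (hortho : ∀ j ∈ Finset.Icc M N, ∀ l ∈ Finset.Icc M N, ∀ R ∈ Set.Ioi (0:ℝ),
      (∫ z in (-H)..0, γ R z * φ j R z * φ l R z) = if j = l then 1 else 0)
    (C : ℤ → ℤ → ℝ → ℝ)
    (hC : ∀ j ∈ Finset.Icc M N, ∀ l ∈ Finset.Icc M N, ∀ R ∈ Set.Ioi (0:ℝ),
      C j l R = ∫ z in (-H)..0, γ R z * φR j R z * φ l R z)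
    (k θ : ℤ → ℝ → ℝ) (A : ℤ → ℝ → ℂ)
    (hθ : ∀ j ∈ Finset.Icc M N, ∀ R ∈ Set.Ioi (0:ℝ), HasDerivAt (θ j) (k j R) R)
    (hA : ∀ j ∈ Finset.Icc M N, ∀ R ∈ Set.Ioi (0:ℝ), DifferentiableAt ℝ (A j) R)
    (P : ℝ → ℝ → ℂ)
    (hP : ∀ r z, P r z = ∑ j ∈ Finset.Icc M N,
      A j (ε * r) * (φ j (ε * r) z : ℂ)
        * Complex.exp (Complex.I * (θ j (ε * r) : ℂ) / (ε : ℂ))) :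
    ∀ r ∈ Set.Ioi (0:ℝ),
      (∫ z in (-H)..0,
          γ (ε * r) z * (deriv (fun s => P s z) r * (starRingEnd ℂ) (P r z)).im)
      = (∑ l ∈ Finset.Icc M N, k l (ε * r) * ‖A l (ε * r)‖ ^ 2)
        + ε * ∑ l ∈ Finset.Icc M N, ∑ j ∈ Finset.Icc M N,
            C l j (ε * r) * (A l (ε * r) * (starRingEnd ℂ) (A j (ε * r))
              * Complex.exp (Complex.I * ((θ l (ε * r) : ℂ) - (θ j (ε * r) : ℂ)) / (ε : ℂ))).im
        + ε * ∑ l ∈ Finset.Icc M N,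
            (deriv (A l) (ε * r) * (starRingEnd ℂ) (A l (ε * r))).im := by
  intro r hr
  have hR : ε * r ∈ Set.Ioi (0 : ℝ) := mul_pos hε hr
  have hIcc : [[-H, (0 : ℝ)]] = Set.Icc (-H) 0 := uIcc_of_le (neg_nonpos.mpr hH.le)
  have hderiv : ∀ z ∈ Set.Icc (-H) 0, deriv (fun s => P s z) r = ∑ j ∈ Finset.Icc M N,
      ((ε * deriv (A j) (ε * r) + I * k j (ε * r) * A j (ε * r))
          * exp (I * θ j (ε * r) / ε) * φ j (ε * r) z
        + ε * A j (ε * r) * exp (I * θ j (ε * r) / ε) * φR j (ε * r) z) := fun z hz => by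
    simp_rw [hP]
    exact (HasDerivAt.fun_sum fun j hj => hasDerivAt_mode_comp_mul hε.ne'
      (hA j hj _ hR).hasDerivAt (hφR j hj _ hR z hz) (hθ j hj _ hR)).deriv
  have hmodes : ∀ z, P r z = ∑ l ∈ Finset.Icc M N,
      A l (ε * r) * exp (I * θ l (ε * r) / ε) * φ l (ε * r) z := fun z => by
    rw [hP]
    exact Finset.sum_congr rfl fun l _ => mul_right_comm _ _ _
  have hslice : ∀ {f : ℝ → ℝ → ℝ}, ContinuousOn (fun p : ℝ × ℝ => f p.1 p.2)
      (Set.Ioi 0 ×ˢ Set.Icc (-H) 0) → ContinuousOn (f (ε * r)) [[-H, 0]] :=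
    fun hf => hIcc ▸ hf.uncurry_left _ hR
  rw [integral_congr fun z hz => by rw [hderiv z (hIcc ▸ hz), hmodes z],
    integral_mul_im_sum_mul_conj_sum _ _ _ _ (hslice hγ) (fun j hj => hslice (hφcont j hj))
      (fun j hj => hslice (hφRcont j hj)) (fun l hl => hslice (hφcont l hl)),
    ← sum_modal_flux_coefficients]
  refine Finset.sum_congr rfl fun j hj => Finset.sum_congr rfl fun l hl => ?_
  rw [hortho j hj l hl _ hR, hC j hj l hl _ hR]

/-- **Exact expansion of the depth-integrated radial energy flux of the WKB modal
ansatz.**  With orthonormal local modes `φ_j`, coupling coefficients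
`C_{jl}(R) = ∫ γ φ_{jR} φ_l dz`, phases satisfying `θ_j' = k_j`, and
`P(r,z) = ∑_j A_j(εr) φ_j(εr,z) e^{iθ_j(εr)/ε}`, one has, exactly,
`∫_{−H}^0 γ Im(P_r conj P) dz = ∑_l k_l |A_l|² + ε ∑_{l,j} C_{lj} Im(A_l conj(A_j)
e^{i(θ_l−θ_j)/ε}) + ε ∑_l Im(A_l' conj(A_l))`, all slow-variable functions being
evaluated at `R = εr`. -/
theorem flux_of_modal_ansatz
    (H ε : ℝ) (hH : 0 < H) (hε : 0 < ε) (M N : ℤ)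
    (γ : ℝ → ℝ → ℝ)
    (hγ : ContinuousOn (fun p : ℝ × ℝ => γ p.1 p.2) (Set.Ioi 0 ×ˢ Set.Icc (-H) 0))
    (φ φR : ℤ → ℝ → ℝ → ℝ)
    (hφcont : ∀ j ∈ Finset.Icc M N,
      ContinuousOn (fun p : ℝ × ℝ => φ j p.1 p.2) (Set.Ioi 0 ×ˢ Set.Icc (-H) 0))
    (hφR : ∀ j ∈ Finset.Icc M N, ∀ R ∈ Set.Ioi (0:ℝ), ∀ z ∈ Set.Icc (-H) 0,
      HasDerivAt (fun s => φ j s z) (φR j R z) R)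
    (hφRcont : ∀ j ∈ Finset.Icc M N,
      ContinuousOn (fun p : ℝ × ℝ => φR j p.1 p.2) (Set.Ioi 0 ×ˢ Set.Icc (-H) 0))
    (hortho : ∀ j ∈ Finset.Icc M N, ∀ l ∈ Finset.Icc M N, ∀ R ∈ Set.Ioi (0:ℝ),
      (∫ z in (-H)..0, γ R z * φ j R z * φ l R z) = if j = l then 1 else 0)
    (C : ℤ → ℤ → ℝ → ℝ)
    (hC : ∀ j ∈ Finset.Icc M N, ∀ l ∈ Finset.Icc M N, ∀ R ∈ Set.Ioi (0:ℝ),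
      C j l R = ∫ z in (-H)..0, γ R z * φR j R z * φ l R z)
    (k θ : ℤ → ℝ → ℝ) (A : ℤ → ℝ → ℂ)
    (hk : ∀ j ∈ Finset.Icc M N, ∀ R ∈ Set.Ioi (0:ℝ), DifferentiableAt ℝ (k j) R)
    (hθ : ∀ j ∈ Finset.Icc M N, ∀ R ∈ Set.Ioi (0:ℝ), HasDerivAt (θ j) (k j R) R)
    (hA : ∀ j ∈ Finset.Icc M N, ∀ R ∈ Set.Ioi (0:ℝ), DifferentiableAt ℝ (A j) R)
    (P : ℝ → ℝ → ℂ)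
    (hP : ∀ r z, P r z = ∑ j ∈ Finset.Icc M N,
      A j (ε * r) * (φ j (ε * r) z : ℂ)
        * Complex.exp (Complex.I * (θ j (ε * r) : ℂ) / (ε : ℂ))) :
    ∀ r ∈ Set.Ioi (0:ℝ),
      (∫ z in (-H)..0,
          γ (ε * r) z * (deriv (fun s => P s z) r * (starRingEnd ℂ) (P r z)).im)
      = (∑ l ∈ Finset.Icc M N, k l (ε * r) * ‖A l (ε * r)‖ ^ 2)
        + ε * ∑ l ∈ Finset.Icc M N, ∑ j ∈ Finset.Icc M N,
            C l j (ε * r) * (A l (ε * r) * (starRingEnd ℂ) (A j (ε * r))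
              * Complex.exp (Complex.I * ((θ l (ε * r) : ℂ) - (θ j (ε * r) : ℂ)) / (ε : ℂ))).im
        + ε * ∑ l ∈ Finset.Icc M N,
            (deriv (A l) (ε * r) * (starRingEnd ℂ) (A l (ε * r))).im :=
  flux_of_modal_ansatz_general H ε hH hε M N γ hγ φ φR hφcont hφR hφRcont hortho C hC k θ A hθ hA P
    hP
end

section
/- Fix an integer range {M,…,N} of mode indices and a parameter ε > 0; for each index l let k_l : (0,∞) → ℝ be differentiable with k_l(R) > 0, let θ_l : (0,∞) → ℝ be any function, let A_l : (0,∞) → ℂ be differentiable, and for each pair l, j let α_{lj} : (0,∞) → ℂ be any function. If the family (A_l) satisfies the coupled-mode system (MPE) with coefficients α_{lj}, then for every R > 0: Σ_{l=M}^{N} [ (d/dR)( k_l(R) |A_l(R)|² ) + (1/R) k_l(R) |A_l(R)|² ] + Σ_{l=M}^{N} Σ_{j=M}^{N} Im( α_{lj}(R) A_j(R) conj(A_l(R)) e^{i(θ_j(R)−θ_l(R))/ε} ) = 0. -/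
open Finset ComplexConjugate

theorem HasDerivAt.mul_norm_sq {k : ℝ → ℝ} {A : ℝ → ℂ} {k' : ℝ} {A' : ℂ} {R : ℝ}
    (hk : HasDerivAt k k' R) (hA : HasDerivAt A A' R) :
    HasDerivAt (fun s => k s * ‖A s‖ ^ 2)
      (k' * ‖A R‖ ^ 2 + k R * (2 * (A' * conj (A R)).re)) R := by
  rw [← Complex.inner]
  exact hk.mul hA.norm_sq

/-- Multiplying a mode equation by `conj a` and taking imaginary parts turns it into a
real balance law, since `i κ |a|²` is purely imaginary for real `κ`. -/
theorem energy_balance_of_mode_eq {κ κ' r : ℝ} {a a' S : ℂ}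
    (h : 2 * Complex.I * κ * a' + Complex.I * κ' * a + Complex.I / r * κ * a + S = 0) :
    κ' * ‖a‖ ^ 2 + κ * (2 * (a' * conj a).re) + 1 / r * κ * ‖a‖ ^ 2
      + (S * conj a).im = 0 := by
  have him : ((2 * Complex.I * κ * a' + Complex.I * κ' * a + Complex.I / r * κ * a + S)
      * conj a).im = 0 := by
    rw [h, zero_mul, Complex.zero_im]
  have hdiv : Complex.I / r = ((r⁻¹ : ℝ) : ℂ) * Complex.I := by
    push_cast
    ring
  rw [hdiv] at him
  rw [Complex.sq_norm, Complex.normSq_apply]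
  simp only [Complex.mul_im, Complex.mul_re, Complex.add_re, Complex.add_im,
    Complex.I_re, Complex.I_im, Complex.ofReal_re, Complex.ofReal_im,
    Complex.conj_re, Complex.conj_im, Complex.re_ofNat, Complex.im_ofNat] at him ⊢
  rw [one_div]
  linarith

theorem MPE_energy_identity_general
    (ε : ℝ) (M N : ℤ)
    (k θ : ℤ → ℝ → ℝ) (A : ℤ → ℝ → ℂ) (α : ℤ → ℤ → ℝ → ℂ)
    (hk : ∀ l ∈ Finset.Icc M N, ∀ R ∈ Set.Ioi (0:ℝ), DifferentiableAt ℝ (k l) R)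
    (hA : ∀ l ∈ Finset.Icc M N, ∀ R ∈ Set.Ioi (0:ℝ), DifferentiableAt ℝ (A l) R)
    (hMPE : ∀ l ∈ Finset.Icc M N, ∀ R ∈ Set.Ioi (0:ℝ),
      2 * Complex.I * (k l R : ℂ) * deriv (A l) R
        + Complex.I * ((deriv (k l) R : ℝ) : ℂ) * A l R
        + Complex.I / (R : ℂ) * (k l R : ℂ) * A l R
        + ∑ j ∈ Finset.Icc M N, α l j R * A j R
            * Complex.exp (Complex.I * ((θ j R : ℂ) - (θ l R : ℂ)) / (ε : ℂ)) = 0) :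
    ∀ R ∈ Set.Ioi (0:ℝ),
      (∑ l ∈ Finset.Icc M N,
        (deriv (fun s => k l s * ‖A l s‖ ^ 2) R
          + (1 / R) * k l R * ‖A l R‖ ^ 2))
      + ∑ l ∈ Finset.Icc M N, ∑ j ∈ Finset.Icc M N,
          (α l j R * A j R * (starRingEnd ℂ) (A l R)
            * Complex.exp (Complex.I * ((θ j R : ℂ) - (θ l R : ℂ)) / (ε : ℂ))).im = 0 := by
  intro R hR
  rw [← Finset.sum_add_distrib]
  refine Finset.sum_eq_zero fun l hl => ?_
  have hderiv := ((hk l hl R hR).hasDerivAt.mul_norm_sq (hA l hl R hR).hasDerivAt).deriv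
  have hcoupling : ∑ j ∈ Finset.Icc M N, (α l j R * A j R * conj (A l R)
        * Complex.exp (Complex.I * ((θ j R : ℂ) - (θ l R : ℂ)) / (ε : ℂ))).im
      = ((∑ j ∈ Finset.Icc M N, α l j R * A j R
        * Complex.exp (Complex.I * ((θ j R : ℂ) - (θ l R : ℂ)) / (ε : ℂ))) * conj (A l R)).im := by
    rw [Finset.sum_mul, Complex.im_sum]
    exact Finset.sum_congr rfl fun j _ => by ring_nf
  rw [hderiv, hcoupling, ← energy_balance_of_mode_eq (hMPE l hl R hR)]

/-- **Energy identity for the coupled-mode system (MPE).**  If the amplitudes `A_l`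
satisfy `2i k_l A_l' + i k_l' A_l + (i/R) k_l A_l +
∑_j α_{lj} A_j e^{i(θ_j−θ_l)/ε} = 0` for `l ∈ {M,…,N}` and `R > 0`, then
`∑_l [ (k_l |A_l|²)' + (1/R) k_l |A_l|² ]
  + ∑_{l,j} Im( α_{lj} A_j conj(A_l) e^{i(θ_j−θ_l)/ε} ) = 0` for every `R > 0`. -/
theorem MPE_energy_identity
    (ε : ℝ) (hε : 0 < ε) (M N : ℤ)
    (k θ : ℤ → ℝ → ℝ) (A : ℤ → ℝ → ℂ) (α : ℤ → ℤ → ℝ → ℂ)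
    (hk : ∀ l ∈ Finset.Icc M N, ∀ R ∈ Set.Ioi (0:ℝ), DifferentiableAt ℝ (k l) R)
    (hkpos : ∀ l ∈ Finset.Icc M N, ∀ R ∈ Set.Ioi (0:ℝ), 0 < k l R)
    (hA : ∀ l ∈ Finset.Icc M N, ∀ R ∈ Set.Ioi (0:ℝ), DifferentiableAt ℝ (A l) R)
    (hMPE : ∀ l ∈ Finset.Icc M N, ∀ R ∈ Set.Ioi (0:ℝ),
      2 * Complex.I * (k l R : ℂ) * deriv (A l) R
        + Complex.I * ((deriv (k l) R : ℝ) : ℂ) * A l R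
        + Complex.I / (R : ℂ) * (k l R : ℂ) * A l R
        + ∑ j ∈ Finset.Icc M N, α l j R * A j R
            * Complex.exp (Complex.I * ((θ j R : ℂ) - (θ l R : ℂ)) / (ε : ℂ)) = 0) :
    ∀ R ∈ Set.Ioi (0:ℝ),
      (∑ l ∈ Finset.Icc M N,
        (deriv (fun s => k l s * ‖A l s‖ ^ 2) R
          + (1 / R) * k l R * ‖A l R‖ ^ 2))
      + ∑ l ∈ Finset.Icc M N, ∑ j ∈ Finset.Icc M N,
          (α l j R * A j R * (starRingEnd ℂ) (A l R)
            * Complex.exp (Complex.I * ((θ j R : ℂ) - (θ l R : ℂ)) / (ε : ℂ))).im = 0 :=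
  MPE_energy_identity_general ε M N k θ A α hk hA hMPE
end

section
/- Let H > 0, ε > 0 and a finite index range {M,…,N} be given, and let γ : (0,∞) × [−H,0] → ℝ be continuous. For each index j let φ_j : (0,∞) × [−H,0] → ℝ be continuous and differentiable in its first argument with continuous partial derivative φ_{jR}; assume ∫_{−H}^{0} γ(R,z) φ_j(R,z) φ_l(R,z) dz = δ_{jl} for all R > 0 and define C_{lj}(R) = ∫_{−H}^{0} γ(R,z) φ_{lR}(R,z) φ_j(R,z) dz; assume each C_{lj} is differentiable. Let k_l : (0,∞) → ℝ be differentiable with k_l(R) > 0, let θ_l : (0,∞) → ℝ be differentiable with θ_l' = k_l, let m_{lj} : (0,∞) → ℝ satisfy m_{lj} = m_{jl}, and let A_l : (0,∞) → ℂ be twice differentiable and satisfy the coupled-mode system (MPE) with coefficients α_{lj}(R) = m_{lj}(R) − i k_j(R)( C_{lj}(R) − C_{jl}(R) ). Set P(r,z) = Σ_{j=M}^{N} A_j(εr) φ_j(εr,z) e^{i θ_j(εr)/ε} and F(r) = r ∫_{−H}^{0} γ(εr,z) Im( P_r(r,z) conj(P(r,z)) ) dz. Then for every r > 0, writing R = εr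 and evaluating all slow-variable functions at R, one has the exact identity (1/r) F'(r) = ε² · G(r), where G(r) = (1/R)[ Σ_{l,j} C_{lj} Im( A_l conj(A_j) e^{i(θ_l−θ_j)/ε} ) + Σ_l Im( A_l' conj(A_l) ) ] + Σ_{l,j} [ C_{lj}' Im( A_l conj(A_j) e^{i(θ_l−θ_j)/ε} ) + C_{lj} Im( ( A_l' conj(A_j) + A_l conj(A_j') ) e^{i(θ_l−θ_j)/ε} ) ] + Σ_l Im( A_l'' conj(A_l) ). In particular, the divergence of the depth-integrated acoustic energy flux of the coupled-mode ansatz is O(ε²): its first-order part in ε vanishes identically. -/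
/-!
Write `R = εr`, `c_j(r) = A_j(R) e^{iθ_j(R)/ε}` and `W_{lj} = A_l conj(A_j) e^{i(θ_l-θ_j)/ε}`
(`interference`), so that `P = ∑ c_j φ_j(R, ·)`. Since the `φ_j` are real, orthonormality and the
definition of `C` turn the depth integral of `γ Im(P_r conj P)` into `E(R) + ε B(R)`, with
`E = ∑ k_l |A_l|²` (`modalEnergy`) and `B = ∑ C_{lj} Im W_{lj} + ∑ Im(A_l' conj A_l)`
(`fluxCorrection`). Differentiating `r (E + ε B)`, the `O(ε)` part of `F'/r` is
`ε (E' + E/R + K)`, where `K = ∑ C_{lj}(k_l - k_j) Re W_{lj}` (`energyExchange`) comes from the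
phase derivative inside `B'`. Taking `Im` of (MPE)`_l · conj(A_l)` and summing over `l` gives
`E' + E/R + K = 0`: `W` is Hermitian, so the symmetric `m`-couplings drop out and the
`k_j (C_{lj} - C_{jl})` couplings sum to `K`.
-/

open Set Finset Complex ComplexConjugate MeasureTheory

theorem HasDerivAt.comp_const_mul {𝕜 E : Type*} [NontriviallyNormedField 𝕜]
    [NormedAddCommGroup E] [NormedSpace 𝕜 E] {f : 𝕜 → E} {f' : E} {c x : 𝕜}
    (hf : HasDerivAt f f' (c * x)) : HasDerivAt (fun s => f (c * s)) (c • f') x := by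
  simpa [Function.comp_def] using hf.scomp x ((hasDerivAt_id x).const_mul c)

theorem Finset.sum_sum_eq_zero_of_antisymm {ι M : Type*} [AddCommGroup M] [IsAddTorsionFree M]
    (S : Finset ι) (f : ι → ι → M) (hf : ∀ l ∈ S, ∀ j ∈ S, f l j = -f j l) :
    ∑ l ∈ S, ∑ j ∈ S, f l j = 0 := by
  refine self_eq_neg.mp ?_
  calc ∑ l ∈ S, ∑ j ∈ S, f l j = ∑ l ∈ S, ∑ j ∈ S, -f j l :=
        sum_congr rfl fun l hl => sum_congr rfl fun j hj => hf l hl j hj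
    _ = -∑ l ∈ S, ∑ j ∈ S, f l j := by rw [sum_comm]; simp only [sum_neg_distrib]

theorem intervalIntegral.integral_sum_sum {ι κ E : Type*} [NormedAddCommGroup E]
    [NormedSpace ℝ E] {s : Finset ι} {t : Finset κ} {f : ι → κ → ℝ → E} {a b : ℝ}
    (hf : ∀ i ∈ s, ∀ j ∈ t, IntervalIntegrable (f i j) volume a b) :
    ∫ x in a..b, ∑ i ∈ s, ∑ j ∈ t, f i j x = ∑ i ∈ s, ∑ j ∈ t, ∫ x in a..b, f i j x := by
  rw [integral_finsetSum fun i hi => by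
    simpa only [sum_fn] using IntervalIntegrable.sum t (hf i hi)]
  exact sum_congr rfl fun i hi => integral_finsetSum (hf i hi)

theorem Complex.im_sum_mul_conj_sum {ι : Type*} (S : Finset ι) (x w : ι → ℂ) (f h : ι → ℝ) :
    ((∑ j ∈ S, x j * f j) * conj (∑ l ∈ S, w l * h l)).im
      = ∑ j ∈ S, ∑ l ∈ S, f j * h l * (x j * conj (w l)).im := by
  simp only [map_sum, map_mul, conj_ofReal, sum_mul_sum, im_sum]
  refine sum_congr rfl fun j _ => sum_congr rfl fun l _ => ?_
  rw [← im_ofReal_mul]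
  push_cast
  ring_nf

theorem intervalIntegral.integral_mul_im_deriv_mul_conj_of_expansion {ι : Type*} (S : Finset ι)
    {a b s : ℝ} (g : ℝ → ℝ) (c : ι → ℝ → ℂ) (c' : ι → ℂ) (u : ι → ℝ → ℝ → ℝ) (u' : ι → ℝ → ℝ)
    (hc : ∀ j ∈ S, HasDerivAt (c j) (c' j) s)
    (hu : ∀ j ∈ S, ∀ z ∈ uIcc a b, HasDerivAt (fun s => u j s z) (u' j z) s)
    (huu : ∀ j ∈ S, ∀ l ∈ S, IntervalIntegrable (fun z => g z * u j s z * u l s z) volume a b)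
    (hu'u : ∀ j ∈ S, ∀ l ∈ S, IntervalIntegrable (fun z => g z * u' j z * u l s z) volume a b) :
    ∫ z in a..b, g z * (deriv (fun s => ∑ j ∈ S, c j s * u j s z) s
        * conj (∑ j ∈ S, c j s * u j s z)).im
      = ∑ j ∈ S, ∑ l ∈ S, ((∫ z in a..b, g z * u j s z * u l s z) * (c' j * conj (c l s)).im
          + (∫ z in a..b, g z * u' j z * u l s z) * (c j s * conj (c l s)).im) := by
  have hpoint : ∀ z ∈ uIcc a b,
      g z * (deriv (fun s => ∑ j ∈ S, c j s * u j s z) s * conj (∑ j ∈ S, c j s * u j s z)).im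
        = ∑ j ∈ S, ∑ l ∈ S, (g z * u j s z * u l s z * (c' j * conj (c l s)).im
          + g z * u' j z * u l s z * (c j s * conj (c l s)).im) := by
    intro z hz
    have hP : HasDerivAt (fun s => ∑ j ∈ S, c j s * u j s z)
        (∑ j ∈ S, c' j * u j s z + ∑ j ∈ S, c j s * u' j z) s := by
      rw [← sum_add_distrib]
      exact HasDerivAt.fun_sum fun j hj =>
        ((hc j hj).mul (hu j hj z hz).ofReal_comp).congr_deriv (by ring)
    rw [hP.deriv, add_mul, add_im, im_sum_mul_conj_sum, im_sum_mul_conj_sum, ← sum_add_distrib,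
      mul_sum]
    refine sum_congr rfl fun j _ => ?_
    rw [← sum_add_distrib, mul_sum]
    exact sum_congr rfl fun l _ => by ring
  rw [integral_congr hpoint, integral_sum_sum fun j hj l hl =>
    ((huu j hj l hl).mul_const _).add ((hu'u j hj l hl).mul_const _)]
  refine sum_congr rfl fun j hj => sum_congr rfl fun l hl => ?_
  rw [integral_add ((huu j hj l hl).mul_const _) ((hu'u j hj l hl).mul_const _),
    integral_mul_const, integral_mul_const]

theorem HasDerivAt.comp_const_mul_mul_exp_phase {f : ℝ → ℂ} {ψ : ℝ → ℝ} {f' : ℂ} {κ ε r : ℝ}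
    (hε : ε ≠ 0) (hf : HasDerivAt f f' (ε * r)) (hψ : HasDerivAt ψ κ (ε * r)) :
    HasDerivAt (fun s => f (ε * s) * cexp (I * (ψ (ε * s) : ℂ) / (ε : ℂ)))
      (((ε : ℂ) * f' + I * κ * f (ε * r)) * cexp (I * (ψ (ε * r) : ℂ) / (ε : ℂ))) r := by
  have hphase : HasDerivAt (fun s => I * (ψ (ε * s) : ℂ) / (ε : ℂ)) (I * κ) r := by
    refine (((hψ.comp_const_mul).ofReal_comp.const_mul I).div_const (ε : ℂ)).congr_deriv ?_
    simp only [smul_eq_mul, ofReal_mul]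
    field_simp [ofReal_ne_zero.mpr hε]
  refine (hf.comp_const_mul.fun_mul hphase.cexp).congr_deriv ?_
  simp only [real_smul]
  ring

theorem Complex.exp_phase_mul_conj (ε a b : ℝ) :
    exp (I * a / ε) * conj (exp (I * b / ε)) = exp (I * ((a : ℂ) - b) / ε) := by
  rw [← exp_conj, ← exp_add]
  simp only [map_div₀, map_mul, conj_I, conj_ofReal]
  ring_nf

theorem Complex.mul_exp_phase_mul_conj (ε x y : ℝ) (a b : ℂ) :
    a * exp (I * x / ε) * conj (b * exp (I * y / ε))
      = a * conj b * exp (I * ((x : ℂ) - y) / ε) := by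
  rw [map_mul, ← exp_phase_mul_conj]
  ring

namespace CoupledMode

variable {ι : Type*}

noncomputable def interference (ε : ℝ) (A : ι → ℝ → ℂ) (θ : ι → ℝ → ℝ) (l j : ι) (R : ℝ) : ℂ :=
  A l R * conj (A j R) * cexp (I * ((θ l R : ℂ) - (θ j R : ℂ)) / (ε : ℂ))

def modalEnergy (S : Finset ι) (k : ι → ℝ → ℝ) (A : ι → ℝ → ℂ) (R : ℝ) : ℝ :=
  ∑ l ∈ S, k l R * (A l R * conj (A l R)).re

noncomputable def fluxCorrection (S : Finset ι) (ε : ℝ) (C : ι → ι → ℝ → ℝ) (A : ι → ℝ → ℂ)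
    (θ : ι → ℝ → ℝ) (R : ℝ) : ℝ :=
  ∑ l ∈ S, ∑ j ∈ S, C l j R * (interference ε A θ l j R).im
    + ∑ l ∈ S, (deriv (A l) R * conj (A l R)).im

noncomputable def energyExchange (S : Finset ι) (ε : ℝ) (k : ι → ℝ → ℝ) (C : ι → ι → ℝ → ℝ)
    (A : ι → ℝ → ℂ) (θ : ι → ℝ → ℝ) (R : ℝ) : ℝ :=
  ∑ l ∈ S, ∑ j ∈ S, C l j R * (k l R - k j R) * (interference ε A θ l j R).re

theorem conj_interference (ε : ℝ) (A : ι → ℝ → ℂ) (θ : ι → ℝ → ℝ) (l j : ι) (R : ℝ) :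
    conj (interference ε A θ l j R) = interference ε A θ j l R := by
  simp only [interference, map_mul, conj_conj, ← exp_conj, map_div₀, map_sub, conj_I,
    conj_ofReal]
  ring_nf

theorem sum_sum_mul_im_eq_zero {S : Finset ι} {W : ι → ι → ℂ} (hW : ∀ l j, conj (W l j) = W j l)
    {m : ι → ι → ℝ} (hm : ∀ l ∈ S, ∀ j ∈ S, m l j = m j l) :
    ∑ l ∈ S, ∑ j ∈ S, m l j * (W l j).im = 0 :=
  sum_sum_eq_zero_of_antisymm S _ fun l hl j hj => by
    rw [hm l hl j hj, ← hW j l, conj_im, mul_neg]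

theorem sum_sum_mul_sub_mul_re {S : Finset ι} {W : ι → ι → ℂ} (hW : ∀ l j, conj (W l j) = W j l)
    (k : ι → ℝ) (C : ι → ι → ℝ) :
    ∑ l ∈ S, ∑ j ∈ S, k j * (C l j - C j l) * (W l j).re
      = -∑ l ∈ S, ∑ j ∈ S, C l j * (k l - k j) * (W l j).re := by
  have hswap : ∑ l ∈ S, ∑ j ∈ S, k j * C j l * (W l j).re
      = ∑ l ∈ S, ∑ j ∈ S, k l * C l j * (W l j).re := by
    rw [sum_comm]
    exact sum_congr rfl fun l _ => sum_congr rfl fun j _ => by rw [← hW l j, conj_re]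
  calc ∑ l ∈ S, ∑ j ∈ S, k j * (C l j - C j l) * (W l j).re
      = ∑ l ∈ S, ∑ j ∈ S, k j * C l j * (W l j).re
          - ∑ l ∈ S, ∑ j ∈ S, k j * C j l * (W l j).re := by
        simp only [← sum_sub_distrib, mul_sub, sub_mul]
    _ = -∑ l ∈ S, ∑ j ∈ S, C l j * (k l - k j) * (W l j).re := by
        simp only [hswap, ← sum_sub_distrib, ← sum_neg_distrib]
        exact sum_congr rfl fun l _ => sum_congr rfl fun j _ => by ring

theorem hasDerivAt_interference {ε R : ℝ} {A : ι → ℝ → ℂ} {θ : ι → ℝ → ℝ} {l j : ι} {a b : ℂ}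
    {κ ν : ℝ} (hAl : HasDerivAt (A l) a R) (hAj : HasDerivAt (A j) b R)
    (hθl : HasDerivAt (θ l) κ R) (hθj : HasDerivAt (θ j) ν R) :
    HasDerivAt (interference ε A θ l j)
      ((a * conj (A j R) + A l R * conj b) * cexp (I * ((θ l R : ℂ) - (θ j R : ℂ)) / (ε : ℂ))
        + I * ((κ - ν) / ε : ℝ) * interference ε A θ l j R) R := by
  have hphase := (((hθl.ofReal_comp.fun_sub hθj.ofReal_comp).const_mul I).div_const (ε : ℂ)).cexp
  refine ((hAl.fun_mul hAj.star).fun_mul hphase).congr_deriv ?_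
  simp only [interference, star_def, ofReal_div, ofReal_sub]
  ring

theorem hasDerivAt_modalEnergy {S : Finset ι} {R : ℝ} {k : ι → ℝ → ℝ} {A : ι → ℝ → ℂ}
    (hk : ∀ l ∈ S, DifferentiableAt ℝ (k l) R) (hA : ∀ l ∈ S, DifferentiableAt ℝ (A l) R) :
    HasDerivAt (modalEnergy S k A)
      (∑ l ∈ S, (deriv (k l) R * (A l R * conj (A l R)).re
        + 2 * k l R * (deriv (A l) R * conj (A l R)).re)) R := by
  refine HasDerivAt.fun_sum fun l hl => ?_
  have hA' := (hA l hl).hasDerivAt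
  refine ((hk l hl).hasDerivAt.mul
    (reCLM.hasFDerivAt.comp_hasDerivAt R (hA'.fun_mul hA'.star))).congr_deriv ?_
  simp only [Function.comp_apply, reCLM_apply, add_re, star_def]
  rw [← conj_re (A l R * conj (deriv (A l) R)), map_mul, conj_conj, mul_comm (conj (A l R))]
  ring

theorem hasDerivAt_fluxCorrection {S : Finset ι} {ε R : ℝ} {C : ι → ι → ℝ → ℝ}
    {k θ : ι → ℝ → ℝ} {A : ι → ℝ → ℂ}
    (hC : ∀ l ∈ S, ∀ j ∈ S, DifferentiableAt ℝ (C l j) R)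
    (hθ : ∀ l ∈ S, HasDerivAt (θ l) (k l R) R)
    (hA : ∀ l ∈ S, DifferentiableAt ℝ (A l) R)
    (hA' : ∀ l ∈ S, DifferentiableAt ℝ (deriv (A l)) R) :
    HasDerivAt (fluxCorrection S ε C A θ)
      (∑ l ∈ S, ∑ j ∈ S, (deriv (C l j) R * (interference ε A θ l j R).im
          + C l j R * ((deriv (A l) R * conj (A j R) + A l R * conj (deriv (A j) R))
            * cexp (I * ((θ l R : ℂ) - (θ j R : ℂ)) / (ε : ℂ))).im)
        + ∑ l ∈ S, (deriv (deriv (A l)) R * conj (A l R)).im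
        + ε⁻¹ * energyExchange S ε k C A θ R) R := by
  have hW : ∀ l ∈ S, ∀ j ∈ S, HasDerivAt (fun R => C l j R * (interference ε A θ l j R).im)
      (deriv (C l j) R * (interference ε A θ l j R).im
        + C l j R * ((deriv (A l) R * conj (A j R) + A l R * conj (deriv (A j) R))
          * cexp (I * ((θ l R : ℂ) - (θ j R : ℂ)) / (ε : ℂ))).im
        + ε⁻¹ * (C l j R * (k l R - k j R) * (interference ε A θ l j R).re)) R := by
    intro l hl j hj
    refine ((hC l hl j hj).hasDerivAt.mul (imCLM.hasFDerivAt.comp_hasDerivAt R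
      (hasDerivAt_interference (hA l hl).hasDerivAt (hA j hj).hasDerivAt (hθ l hl)
        (hθ j hj)))).congr_deriv ?_
    simp only [Function.comp_apply, imCLM_apply, add_im, mul_im, mul_re, I_re, I_im, ofReal_re,
      ofReal_im]
    ring
  have hB : ∀ l ∈ S, HasDerivAt (fun R => (deriv (A l) R * conj (A l R)).im)
      (deriv (deriv (A l)) R * conj (A l R)).im R := by
    intro l hl
    refine (imCLM.hasFDerivAt.comp_hasDerivAt R
      ((hA' l hl).hasDerivAt.fun_mul (hA l hl).hasDerivAt.star)).congr_deriv ?_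
    simp only [imCLM_apply, add_im, star_def, mul_conj, ofReal_im, add_zero]
  refine ((HasDerivAt.fun_sum fun l hl => HasDerivAt.fun_sum fun j hj => hW l hl j hj).add
    (HasDerivAt.fun_sum hB)).congr_deriv ?_
  simp only [energyExchange, sum_add_distrib, mul_sum]
  ring

theorem im_uncoupled_mul_conj (κ κ' R : ℝ) (a a' : ℂ) :
    ((2 * I * κ * a' + I * κ' * a + I / R * κ * a) * conj a).im
      = κ' * (a * conj a).re + 2 * κ * (a' * conj a).re + κ * (a * conj a).re / R := by
  have h : (2 * I * κ * a' + I * κ' * a + I / R * κ * a) * conj a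
      = I * (((2 * κ : ℝ) : ℂ) * (a' * conj a)) + I * (((κ' + κ / R : ℝ) : ℂ) * (a * conj a)) := by
    push_cast
    ring
  rw [h, add_im, I_mul_im, I_mul_im, re_ofReal_mul, re_ofReal_mul]
  ring

theorem im_coupling_mul_conj (ε R : ℝ) (A : ι → ℝ → ℂ) (θ : ι → ℝ → ℝ) (l j : ι)
    (m κ c₁ c₂ : ℝ) :
    (((m : ℂ) - I * κ * ((c₁ : ℂ) - c₂)) * A j R
        * cexp (I * ((θ j R : ℂ) - (θ l R : ℂ)) / (ε : ℂ)) * conj (A l R)).im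
      = -(m * (interference ε A θ l j R).im
          + κ * (c₁ - c₂) * (interference ε A θ l j R).re) := by
  have hW : A j R * cexp (I * ((θ j R : ℂ) - (θ l R : ℂ)) / (ε : ℂ)) * conj (A l R)
      = conj (interference ε A θ l j R) := by
    rw [conj_interference, interference]
    ring
  rw [mul_assoc _ (A j R), mul_assoc, hW]
  simp only [mul_im, sub_re, sub_im, mul_re, I_re, I_im, ofReal_re, ofReal_im, conj_re, conj_im]
  ring

theorem modalEnergy_balance {S : Finset ι} {ε R : ℝ} {m : ι → ι → ℝ → ℝ} {C : ι → ι → ℝ → ℝ}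
    {k θ : ι → ℝ → ℝ} {A : ι → ℝ → ℂ}
    (hm : ∀ l ∈ S, ∀ j ∈ S, m l j R = m j l R)
    (hMPE : ∀ l ∈ S, 2 * I * (k l R : ℂ) * deriv (A l) R
        + I * ((deriv (k l) R : ℝ) : ℂ) * A l R
        + I / (R : ℂ) * (k l R : ℂ) * A l R
        + ∑ j ∈ S, ((m l j R : ℂ) - I * (k j R : ℂ) * ((C l j R : ℂ) - (C j l R : ℂ)))
            * A j R * cexp (I * ((θ j R : ℂ) - (θ l R : ℂ)) / (ε : ℂ)) = 0) :
    ∑ l ∈ S, (deriv (k l) R * (A l R * conj (A l R)).re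
        + 2 * k l R * (deriv (A l) R * conj (A l R)).re)
      + modalEnergy S k A R / R + energyExchange S ε k C A θ R = 0 := by
  have hrow : ∀ l ∈ S, deriv (k l) R * (A l R * conj (A l R)).re
        + 2 * k l R * (deriv (A l) R * conj (A l R)).re + k l R * (A l R * conj (A l R)).re / R
      = ∑ j ∈ S, (m l j R * (interference ε A θ l j R).im
        + k j R * (C l j R - C j l R) * (interference ε A θ l j R).re) := by
    intro l hl
    have h := congrArg (fun z => (z * conj (A l R)).im) (hMPE l hl)
    rw [add_mul, sum_mul, add_im, im_uncoupled_mul_conj, im_sum, zero_mul, zero_im] at h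
    simp only [im_coupling_mul_conj, sum_neg_distrib] at h
    linarith
  have hW : ∀ l j, conj (interference ε A θ l j R) = interference ε A θ j l R :=
    fun l j => conj_interference ε A θ l j R
  have hcoupling : ∑ l ∈ S, ∑ j ∈ S, (m l j R * (interference ε A θ l j R).im
        + k j R * (C l j R - C j l R) * (interference ε A θ l j R).re)
      = -energyExchange S ε k C A θ R := by
    simp only [sum_add_distrib, sum_sum_mul_im_eq_zero hW hm, zero_add]
    exact sum_sum_mul_sub_mul_re hW (fun j => k j R) (fun l j => C l j R)
  have hsum := sum_congr rfl hrow
  rw [sum_add_distrib, hcoupling, ← sum_div] at hsum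
  rw [modalEnergy]
  linarith

theorem integral_flux_eq [DecidableEq ι] {S : Finset ι} {H ε r : ℝ} (hH : 0 ≤ H) (hε : ε ≠ 0)
    {γ : ℝ → ℝ → ℝ} {φ φR : ι → ℝ → ℝ → ℝ} {C : ι → ι → ℝ → ℝ} {k θ : ι → ℝ → ℝ}
    {A : ι → ℝ → ℂ} {P : ℝ → ℝ → ℂ}
    (hγ : ContinuousOn (γ (ε * r)) (Icc (-H) 0))
    (hφ : ∀ j ∈ S, ContinuousOn (φ j (ε * r)) (Icc (-H) 0))
    (hφR : ∀ j ∈ S, ∀ z ∈ Icc (-H) 0, HasDerivAt (fun s => φ j s z) (φR j (ε * r) z) (ε * r))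
    (hφRcont : ∀ j ∈ S, ContinuousOn (φR j (ε * r)) (Icc (-H) 0))
    (hortho : ∀ j ∈ S, ∀ l ∈ S,
      ∫ z in (-H)..0, γ (ε * r) z * φ j (ε * r) z * φ l (ε * r) z = if j = l then 1 else 0)
    (hC : ∀ l ∈ S, ∀ j ∈ S,
      C l j (ε * r) = ∫ z in (-H)..0, γ (ε * r) z * φR l (ε * r) z * φ j (ε * r) z)
    (hθ : ∀ l ∈ S, HasDerivAt (θ l) (k l (ε * r)) (ε * r))
    (hA : ∀ l ∈ S, DifferentiableAt ℝ (A l) (ε * r))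
    (hP : ∀ s z, P s z = ∑ j ∈ S,
      A j (ε * s) * (φ j (ε * s) z : ℂ) * cexp (I * (θ j (ε * s) : ℂ) / (ε : ℂ))) :
    ∫ z in (-H)..0, γ (ε * r) z * (deriv (fun s => P s z) r * conj (P r z)).im
      = modalEnergy S k A (ε * r) + ε * fluxCorrection S ε C A θ (ε * r) := by
  set R := ε * r
  set c : ι → ℝ → ℂ := fun j s => A j (ε * s) * cexp (I * (θ j (ε * s) : ℂ) / (ε : ℂ))
  obtain rfl : P = fun s z => ∑ j ∈ S, c j s * (φ j (ε * s) z : ℂ) :=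
    funext fun s => funext fun z => by rw [hP]; exact sum_congr rfl fun j _ => by ring
  have hIcc : uIcc (-H) 0 = Icc (-H) 0 := uIcc_of_le (by linarith)
  have hint : ∀ f g : ℝ → ℝ, ContinuousOn f (Icc (-H) 0) → ContinuousOn g (Icc (-H) 0) →
      IntervalIntegrable (fun z => γ R z * f z * g z) volume (-H) 0 := fun f g hf hg =>
    ((hγ.mul hf).mul hg).intervalIntegrable_of_Icc (by linarith)
  have hexpand := intervalIntegral.integral_mul_im_deriv_mul_conj_of_expansion S (γ R) c
    (fun j => ((ε : ℂ) * deriv (A j) R + I * k j R * A j R) * cexp (I * (θ j R : ℂ) / (ε : ℂ)))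
    (fun j s z => φ j (ε * s) z) (fun j z => ε * φR j R z)
    (fun j hj => (hA j hj).hasDerivAt.comp_const_mul_mul_exp_phase hε (hθ j hj))
    (fun j hj z hz => (hφR j hj z (hIcc ▸ hz)).comp_const_mul)
    (fun j hj l hl => hint _ _ (hφ j hj) (hφ l hl))
    (fun j hj l hl => hint _ _ (continuousOn_const.mul (hφRcont j hj)) (hφ l hl))
  have hεC : ∀ j ∈ S, ∀ l ∈ S,
      ∫ z in (-H)..0, γ R z * (ε * φR j R z) * φ l (ε * r) z = ε * C j l R := by
    intro j hj l hl
    rw [hC j hj l hl, ← intervalIntegral.integral_const_mul]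
    exact intervalIntegral.integral_congr fun z _ => by ring
  have hcc : ∀ j l, c j r * conj (c l r) = interference ε A θ j l R := fun j l =>
    mul_exp_phase_mul_conj ε _ _ _ _
  have hc'c : ∀ j, (((ε : ℂ) * deriv (A j) R + I * k j R * A j R)
        * cexp (I * (θ j R : ℂ) / (ε : ℂ)) * conj (c j r)).im
      = ε * (deriv (A j) R * conj (A j R)).im + k j R * (A j R * conj (A j R)).re := by
    intro j
    rw [mul_exp_phase_mul_conj, sub_self, mul_zero, zero_div, exp_zero, mul_one, add_mul,
      add_im, mul_assoc, im_ofReal_mul, mul_assoc, mul_assoc, I_mul_im, re_ofReal_mul]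
  rw [hexpand]
  calc _ = ∑ j ∈ S, ∑ l ∈ S, ((if j = l then 1 else 0)
          * (((ε : ℂ) * deriv (A j) R + I * k j R * A j R)
            * cexp (I * (θ j R : ℂ) / (ε : ℂ)) * conj (c l r)).im
          + ε * (C j l R * (interference ε A θ j l R).im)) :=
        sum_congr rfl fun j hj => sum_congr rfl fun l hl => by
          rw [hortho j hj l hl, hεC j hj l hl, hcc, mul_assoc ε]
    _ = ∑ j ∈ S, ((((ε : ℂ) * deriv (A j) R + I * k j R * A j R)
          * cexp (I * (θ j R : ℂ) / (ε : ℂ)) * conj (c j r)).im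
          + ε * ∑ l ∈ S, C j l R * (interference ε A θ j l R).im) :=
        sum_congr rfl fun j hj => by
          simp only [sum_add_distrib, ite_mul, one_mul, zero_mul, sum_ite_eq, if_pos hj, mul_sum]
    _ = _ := by
        simp only [hc'c, modalEnergy, fluxCorrection, sum_add_distrib, mul_add, mul_sum]
        ring

end CoupledMode

theorem flux_divergence_is_order_eps_sq_general
    (H ε : ℝ) (hH : 0 < H) (hε : 0 < ε) (M N : ℤ)
    (γ : ℝ → ℝ → ℝ)
    (hγ : ContinuousOn (fun p : ℝ × ℝ => γ p.1 p.2) (Set.Ioi 0 ×ˢ Set.Icc (-H) 0))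
    (φ φR : ℤ → ℝ → ℝ → ℝ)
    (hφcont : ∀ j ∈ Finset.Icc M N,
      ContinuousOn (fun p : ℝ × ℝ => φ j p.1 p.2) (Set.Ioi 0 ×ˢ Set.Icc (-H) 0))
    (hφR : ∀ j ∈ Finset.Icc M N, ∀ R ∈ Set.Ioi (0:ℝ), ∀ z ∈ Set.Icc (-H) 0,
      HasDerivAt (fun s => φ j s z) (φR j R z) R)
    (hφRcont : ∀ j ∈ Finset.Icc M N,
      ContinuousOn (fun p : ℝ × ℝ => φR j p.1 p.2) (Set.Ioi 0 ×ˢ Set.Icc (-H) 0))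
    (hortho : ∀ j ∈ Finset.Icc M N, ∀ l ∈ Finset.Icc M N, ∀ R ∈ Set.Ioi (0:ℝ),
      (∫ z in (-H)..0, γ R z * φ j R z * φ l R z) = if j = l then 1 else 0)
    (C : ℤ → ℤ → ℝ → ℝ)
    (hC : ∀ l ∈ Finset.Icc M N, ∀ j ∈ Finset.Icc M N, ∀ R ∈ Set.Ioi (0:ℝ),
      C l j R = ∫ z in (-H)..0, γ R z * φR l R z * φ j R z)
    (hCdiff : ∀ l ∈ Finset.Icc M N, ∀ j ∈ Finset.Icc M N, ∀ R ∈ Set.Ioi (0:ℝ),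
      DifferentiableAt ℝ (C l j) R)
    (k θ : ℤ → ℝ → ℝ) (m : ℤ → ℤ → ℝ → ℝ) (A : ℤ → ℝ → ℂ)
    (hk : ∀ l ∈ Finset.Icc M N, ∀ R ∈ Set.Ioi (0:ℝ), DifferentiableAt ℝ (k l) R)
    (hθ : ∀ l ∈ Finset.Icc M N, ∀ R ∈ Set.Ioi (0:ℝ), HasDerivAt (θ l) (k l R) R)
    (hm : ∀ l ∈ Finset.Icc M N, ∀ j ∈ Finset.Icc M N, ∀ R ∈ Set.Ioi (0:ℝ), m l j R = m j l R)
    (hA : ∀ l ∈ Finset.Icc M N, ∀ R ∈ Set.Ioi (0:ℝ), DifferentiableAt ℝ (A l) R)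
    (hA' : ∀ l ∈ Finset.Icc M N, ∀ R ∈ Set.Ioi (0:ℝ), DifferentiableAt ℝ (deriv (A l)) R)
    (hMPE : ∀ l ∈ Finset.Icc M N, ∀ R ∈ Set.Ioi (0:ℝ),
      2 * Complex.I * (k l R : ℂ) * deriv (A l) R
        + Complex.I * ((deriv (k l) R : ℝ) : ℂ) * A l R
        + Complex.I / (R : ℂ) * (k l R : ℂ) * A l R
        + ∑ j ∈ Finset.Icc M N,
            ((m l j R : ℂ) - Complex.I * (k j R : ℂ) * ((C l j R : ℂ) - (C j l R : ℂ)))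
              * A j R
              * Complex.exp (Complex.I * ((θ j R : ℂ) - (θ l R : ℂ)) / (ε : ℂ)) = 0)
    (P : ℝ → ℝ → ℂ)
    (hP : ∀ r z, P r z = ∑ j ∈ Finset.Icc M N,
      A j (ε * r) * (φ j (ε * r) z : ℂ)
        * Complex.exp (Complex.I * (θ j (ε * r) : ℂ) / (ε : ℂ)))
    (F : ℝ → ℝ)
    (hF : ∀ r, F r = r * ∫ z in (-H)..0,
      γ (ε * r) z * (deriv (fun s => P s z) r * (starRingEnd ℂ) (P r z)).im) :
    ∀ r ∈ Set.Ioi (0:ℝ),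
      (1 / r) * deriv F r
      = ε ^ 2 *
        ((1 / (ε * r)) *
          ((∑ l ∈ Finset.Icc M N, ∑ j ∈ Finset.Icc M N,
              C l j (ε * r) * (A l (ε * r) * (starRingEnd ℂ) (A j (ε * r))
                * Complex.exp (Complex.I
                    * ((θ l (ε * r) : ℂ) - (θ j (ε * r) : ℂ)) / (ε : ℂ))).im)
            + ∑ l ∈ Finset.Icc M N,
                (deriv (A l) (ε * r) * (starRingEnd ℂ) (A l (ε * r))).im)
        + (∑ l ∈ Finset.Icc M N, ∑ j ∈ Finset.Icc M N,
            (deriv (C l j) (ε * r) *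
              (A l (ε * r) * (starRingEnd ℂ) (A j (ε * r))
                * Complex.exp (Complex.I
                    * ((θ l (ε * r) : ℂ) - (θ j (ε * r) : ℂ)) / (ε : ℂ))).im
            + C l j (ε * r) *
              ((deriv (A l) (ε * r) * (starRingEnd ℂ) (A j (ε * r))
                  + A l (ε * r) * (starRingEnd ℂ) (deriv (A j) (ε * r)))
                * Complex.exp (Complex.I
                    * ((θ l (ε * r) : ℂ) - (θ j (ε * r) : ℂ)) / (ε : ℂ))).im))
        + ∑ l ∈ Finset.Icc M N,
            (deriv (deriv (A l)) (ε * r) * (starRingEnd ℂ) (A l (ε * r))).im) := by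
  intro r hr
  have hflux : F =ᶠ[nhds r] fun s => s * (CoupledMode.modalEnergy (Icc M N) k A (ε * s)
      + ε * CoupledMode.fluxCorrection (Icc M N) ε C A θ (ε * s)) := by
    filter_upwards [Ioi_mem_nhds hr] with s hs
    have hR : ε * s ∈ Set.Ioi (0 : ℝ) := mul_pos hε hs
    rw [hF, CoupledMode.integral_flux_eq hH.le hε.ne' (hγ.uncurry_left _ hR)
      (fun j hj => (hφcont j hj).uncurry_left _ hR) (fun j hj => hφR j hj _ hR)
      (fun j hj => (hφRcont j hj).uncurry_left _ hR) (fun j hj l hl => hortho j hj l hl _ hR)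
      (fun l hl j hj => hC l hl j hj _ hR) (fun l hl => hθ l hl _ hR) (fun l hl => hA l hl _ hR)
      hP]
  have hR : ε * r ∈ Set.Ioi (0 : ℝ) := mul_pos hε hr
  have hE := CoupledMode.hasDerivAt_modalEnergy (fun l hl => hk l hl _ hR)
    (fun l hl => hA l hl _ hR)
  have hB := CoupledMode.hasDerivAt_fluxCorrection (ε := ε)
    (fun l hl j hj => hCdiff l hl j hj _ hR) (fun l hl => hθ l hl _ hR)
    (fun l hl => hA l hl _ hR) (fun l hl => hA' l hl _ hR)
  have hbalance := CoupledMode.modalEnergy_balance (fun l hl j hj => hm l hl j hj _ hR)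
    (fun l hl => hMPE l hl _ hR)
  rw [hflux.deriv_eq,
    ((hasDerivAt_id' r).fun_mul
      (hE.comp_const_mul.fun_add (hB.comp_const_mul.const_mul ε))).deriv]
  simp only [CoupledMode.fluxCorrection, CoupledMode.interference, smul_eq_mul]
  have hε0 : ε ≠ 0 := hε.ne'
  have hr0 : r ≠ 0 := hr.ne'
  linear_combination (norm := skip) ε * hbalance
  field_simp
  ring

/-- **The divergence of the depth-integrated energy flux of the coupled-mode ansatz
is exactly of order `ε²`.**  For amplitudes solving the coupled-mode system (MPE)
with the lossless coefficients `α_{lj} = m_{lj} − i k_j (C_{lj} − C_{jl})`, the flux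
`F(r) = r ∫_{−H}^0 γ Im(P_r conj P) dz` of the WKB ansatz
`P = ∑_j A_j(εr) φ_j(εr,z) e^{iθ_j(εr)/ε}` satisfies the exact identity
`(1/r) F'(r) = ε² G(r)`; in particular its first-order part in `ε` vanishes. -/
theorem flux_divergence_is_order_eps_sq
    (H ε : ℝ) (hH : 0 < H) (hε : 0 < ε) (M N : ℤ)
    (γ : ℝ → ℝ → ℝ)
    (hγ : ContinuousOn (fun p : ℝ × ℝ => γ p.1 p.2) (Set.Ioi 0 ×ˢ Set.Icc (-H) 0))
    (φ φR : ℤ → ℝ → ℝ → ℝ)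
    (hφcont : ∀ j ∈ Finset.Icc M N,
      ContinuousOn (fun p : ℝ × ℝ => φ j p.1 p.2) (Set.Ioi 0 ×ˢ Set.Icc (-H) 0))
    (hφR : ∀ j ∈ Finset.Icc M N, ∀ R ∈ Set.Ioi (0:ℝ), ∀ z ∈ Set.Icc (-H) 0,
      HasDerivAt (fun s => φ j s z) (φR j R z) R)
    (hφRcont : ∀ j ∈ Finset.Icc M N,
      ContinuousOn (fun p : ℝ × ℝ => φR j p.1 p.2) (Set.Ioi 0 ×ˢ Set.Icc (-H) 0))
    (hortho : ∀ j ∈ Finset.Icc M N, ∀ l ∈ Finset.Icc M N, ∀ R ∈ Set.Ioi (0:ℝ),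
      (∫ z in (-H)..0, γ R z * φ j R z * φ l R z) = if j = l then 1 else 0)
    (C : ℤ → ℤ → ℝ → ℝ)
    (hC : ∀ l ∈ Finset.Icc M N, ∀ j ∈ Finset.Icc M N, ∀ R ∈ Set.Ioi (0:ℝ),
      C l j R = ∫ z in (-H)..0, γ R z * φR l R z * φ j R z)
    (hCdiff : ∀ l ∈ Finset.Icc M N, ∀ j ∈ Finset.Icc M N, ∀ R ∈ Set.Ioi (0:ℝ),
      DifferentiableAt ℝ (C l j) R)
    (k θ : ℤ → ℝ → ℝ) (m : ℤ → ℤ → ℝ → ℝ) (A : ℤ → ℝ → ℂ)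
    (hk : ∀ l ∈ Finset.Icc M N, ∀ R ∈ Set.Ioi (0:ℝ), DifferentiableAt ℝ (k l) R)
    (hkpos : ∀ l ∈ Finset.Icc M N, ∀ R ∈ Set.Ioi (0:ℝ), 0 < k l R)
    (hθ : ∀ l ∈ Finset.Icc M N, ∀ R ∈ Set.Ioi (0:ℝ), HasDerivAt (θ l) (k l R) R)
    (hm : ∀ l ∈ Finset.Icc M N, ∀ j ∈ Finset.Icc M N, ∀ R ∈ Set.Ioi (0:ℝ), m l j R = m j l R)
    (hA : ∀ l ∈ Finset.Icc M N, ∀ R ∈ Set.Ioi (0:ℝ), DifferentiableAt ℝ (A l) R)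
    (hA' : ∀ l ∈ Finset.Icc M N, ∀ R ∈ Set.Ioi (0:ℝ), DifferentiableAt ℝ (deriv (A l)) R)
    (hMPE : ∀ l ∈ Finset.Icc M N, ∀ R ∈ Set.Ioi (0:ℝ),
      2 * Complex.I * (k l R : ℂ) * deriv (A l) R
        + Complex.I * ((deriv (k l) R : ℝ) : ℂ) * A l R
        + Complex.I / (R : ℂ) * (k l R : ℂ) * A l R
        + ∑ j ∈ Finset.Icc M N,
            ((m l j R : ℂ) - Complex.I * (k j R : ℂ) * ((C l j R : ℂ) - (C j l R : ℂ)))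
              * A j R
              * Complex.exp (Complex.I * ((θ j R : ℂ) - (θ l R : ℂ)) / (ε : ℂ)) = 0)
    (P : ℝ → ℝ → ℂ)
    (hP : ∀ r z, P r z = ∑ j ∈ Finset.Icc M N,
      A j (ε * r) * (φ j (ε * r) z : ℂ)
        * Complex.exp (Complex.I * (θ j (ε * r) : ℂ) / (ε : ℂ)))
    (F : ℝ → ℝ)
    (hF : ∀ r, F r = r * ∫ z in (-H)..0,
      γ (ε * r) z * (deriv (fun s => P s z) r * (starRingEnd ℂ) (P r z)).im) :
    ∀ r ∈ Set.Ioi (0:ℝ),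
      (1 / r) * deriv F r
      = ε ^ 2 *
        ((1 / (ε * r)) *
          ((∑ l ∈ Finset.Icc M N, ∑ j ∈ Finset.Icc M N,
              C l j (ε * r) * (A l (ε * r) * (starRingEnd ℂ) (A j (ε * r))
                * Complex.exp (Complex.I
                    * ((θ l (ε * r) : ℂ) - (θ j (ε * r) : ℂ)) / (ε : ℂ))).im)
            + ∑ l ∈ Finset.Icc M N,
                (deriv (A l) (ε * r) * (starRingEnd ℂ) (A l (ε * r))).im)
        + (∑ l ∈ Finset.Icc M N, ∑ j ∈ Finset.Icc M N,
            (deriv (C l j) (ε * r) *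
              (A l (ε * r) * (starRingEnd ℂ) (A j (ε * r))
                * Complex.exp (Complex.I
                    * ((θ l (ε * r) : ℂ) - (θ j (ε * r) : ℂ)) / (ε : ℂ))).im
            + C l j (ε * r) *
              ((deriv (A l) (ε * r) * (starRingEnd ℂ) (A j (ε * r))
                  + A l (ε * r) * (starRingEnd ℂ) (deriv (A j) (ε * r)))
                * Complex.exp (Complex.I
                    * ((θ l (ε * r) : ℂ) - (θ j (ε * r) : ℂ)) / (ε : ℂ))).im))
        + ∑ l ∈ Finset.Icc M N,
            (deriv (deriv (A l)) (ε * r) * (starRingEnd ℂ) (A l (ε * r))).im) :=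
  flux_divergence_is_order_eps_sq_general H ε hH hε M N γ hγ φ φR hφcont hφR hφRcont hortho C hC
    hCdiff k θ m A hk hθ hm hA hA' hMPE P hP F hF
end
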